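/- Let {0} = N'_0 ⊂ N'_1 ⊂ ... ⊂ N'_r = F_q^{s'} be a chain of linear [s', k'_u, δ'_u]_q-codes generated by vectors v_1,...,v_{s'} in upper triangular position (the first i−1 entries of v_i are 0), let e_u = k'_u − k'_{u−1} and q_u = q^{e_u}, and for positive integers s_1 ≤ s_2 ≤ ... ≤ s_r let N_u be an ((s_u,n),α,K_u,δ_u)_{q_u}-space. Then there exists an ((s_1 e_1 + ... + s_r e_r, n), α, K_1···K_r, δ)_q-space with δ ≥ min_{1≤u≤r} δ_u δ'_u. -/

import Mathlib

/-!
Write a word of the concatenated space column by column: column `j` at block position `i` is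
the inner word `∑ D u j i t • v (k' u + t)`, where `D u` is padded with zero columns beyond
`s_u`. Because the `v`'s are upper triangular and `s_u` grows with `u`, the coordinates of
level `u` vanish in every column `j ≥ s_u`, and these are the ones deleted.

For `A ≠ B`, let `u` be the highest level where they differ. In each column `j < s_u`, a
nonzero symbol of `A u - B u` at position `i` gives a nonzero word of the inner code of level
`u + 1`, hence at least `δ'_{u+1}` nonzero coordinates, and `i` still counts among the `α`
largest positions in each of those coordinates' blocks. Hence the distance is at least
`δ'_{u+1} μ(A u - B u) ≥ δ'_{u+1} δ_u`.
-/

/-- Sum of the `α` largest elements of a finite set of naturals. -/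
def topSum (α : ℕ) (T : Finset ℕ) : ℕ := ((T.sort (· ≤ ·)).reverse.take α).sum

/-- The higher order weight `μ_{α,n}` of a single block `a ∈ G^n`. -/
def muBlock (α : ℕ) {G : Type*} [Zero G] [DecidableEq G] {n : ℕ} (a : Fin n → G) : ℕ :=
  topSum α ((Finset.univ.filter (fun i => a i ≠ 0)).image (fun i : Fin n => (i : ℕ) + 1))

/-- The higher order weight `μ_{α,n}` on `G^{ns}`, extended additively over the `s` blocks. -/
def muWt (α : ℕ) {G : Type*} [Zero G] [DecidableEq G] {s n : ℕ} (A : Fin s → Fin n → G) : ℕ :=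
  ∑ j, muBlock α (A j)

/-- Hamming weight of a codeword (the weight `μ_{1,1}` for `n' = α' = 1`). -/
def hammingW {F : Type*} [Zero F] [DecidableEq F] {s' : ℕ} (w : Fin s' → F) : ℕ :=
  (Finset.univ.filter (fun j => w j ≠ 0)).card

theorem Finset.sum_range_tsub_of_monotoneOn {f : ℕ → ℕ} {N : ℕ} (hf : MonotoneOn f (Set.Iic N)) :
    ∑ m ∈ Finset.range N, (f (m + 1) - f m) = f N - f 0 := by
  have hmono : Monotone fun m => f (min m N) := fun a b hab =>
    hf (Set.mem_Iic.mpr (min_le_right _ _)) (Set.mem_Iic.mpr (min_le_right _ _))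
      (min_le_min_right N hab)
  convert Finset.sum_range_tsub hmono N using 2 with m hm
  · rw [Finset.mem_range] at hm
    rw [min_eq_left hm.le, min_eq_left hm]
  · rw [min_self]
  · rw [min_eq_left (Nat.zero_le N)]

theorem exists_sigmaFinEquiv_val_eq {r s : ℕ} {k : ℕ → ℕ} (hk : MonotoneOn k (Set.Iic r))
    (h0 : k 0 = 0) (hr : k r = s) :
    ∃ E : (Σ u : Fin r, Fin (k (u + 1) - k u)) ≃ Fin s, ∀ p, (E p : ℕ) = k p.1 + p.2 := by
  have htel : ∀ u ≤ r, ∑ i : Fin u, (k (i + 1) - k i) = k u := fun u hu => by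
    rw [Fin.sum_univ_eq_sum_range (fun i => k (i + 1) - k i),
      Finset.sum_range_tsub_of_monotoneOn (hk.mono (Set.Iic_subset_Iic.mpr hu)), h0, Nat.sub_zero]
  refine ⟨finSigmaFinEquiv.trans (finCongr ((htel r le_rfl).trans hr)), fun p => ?_⟩
  simp only [Equiv.trans_apply, finCongr_apply, Fin.val_cast, finSigmaFinEquiv_apply,
    Fin.val_castLE]
  rw [htel p.1 p.1.2.le]

theorem List.sum_le_sum_take_of_pairwise_ge {L : List ℕ} (hL : L.Pairwise (· ≥ ·))
    {S : Finset ℕ} (hS : S ⊆ L.toFinset) {k : ℕ} (hk : S.card ≤ k) :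
    ∑ x ∈ S, x ≤ (L.take k).sum := by
  induction L generalizing S k with
  | nil => simp_all
  | cons a L ih =>
    rcases S.eq_empty_or_nonempty with rfl | hne
    · simp
    obtain ⟨a_ge, hL⟩ := List.pairwise_cons.mp hL
    obtain ⟨b, hbS, hba, herase⟩ : ∃ b ∈ S, b ≤ a ∧ S.erase b ⊆ L.toFinset := by
      by_cases ha : a ∈ S
      · refine ⟨a, ha, le_rfl, fun x hx => ?_⟩
        obtain ⟨hxa, hxS⟩ := Finset.mem_erase.mp hx
        simpa [hxa] using hS hxS
      · obtain ⟨b, hb⟩ := hne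
        have hsub : S ⊆ L.toFinset := fun x hx => by
          simpa [show x ≠ a by rintro rfl; exact ha hx] using hS hx
        exact ⟨b, hb, a_ge b (List.mem_toFinset.mp (hsub hb)),
          (Finset.erase_subset b S).trans hsub⟩
    obtain ⟨k, rfl⟩ : ∃ k', k = k' + 1 := Nat.exists_eq_succ_of_ne_zero (by
      have := hne.card_pos; omega)
    have hcard : (S.erase b).card ≤ k := by rw [Finset.card_erase_of_mem hbS]; omega
    rw [← Finset.add_sum_erase S _ hbS, List.take_succ_cons, List.sum_cons]
    exact Nat.add_le_add hba (ih hL herase hcard)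

theorem exists_subset_sum_eq_topSum (α : ℕ) (T : Finset ℕ) :
    ∃ S ⊆ T, S.card ≤ α ∧ ∑ x ∈ S, x = topSum α T := by
  have hnodup : ((T.sort (· ≤ ·)).reverse.take α).Nodup :=
    (List.nodup_reverse.mpr (T.sort_nodup _)).sublist (List.take_sublist _ _)
  refine ⟨((T.sort (· ≤ ·)).reverse.take α).toFinset, fun x hx => ?_, ?_, ?_⟩
  · simpa using List.mem_of_mem_take (List.mem_toFinset.mp hx)
  · exact (List.toFinset_card_le _).trans (List.length_take_le _ _)
  · rw [List.sum_toFinset _ hnodup, List.map_id']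
    rfl

theorem sum_le_topSum {α : ℕ} {S T : Finset ℕ} (hST : S ⊆ T) (hS : S.card ≤ α) :
    ∑ x ∈ S, x ≤ topSum α T := by
  refine List.sum_le_sum_take_of_pairwise_ge ?_ (by simpa using hST) hS
  rw [List.pairwise_reverse]
  exact (T.pairwise_sort _).imp fun h => h

section muBlock

variable {G : Type*} [Zero G] [DecidableEq G] {n : ℕ}

theorem exists_support_sum_eq_muBlock (α : ℕ) (a : Fin n → G) :
    ∃ S : Finset (Fin n), (∀ i ∈ S, a i ≠ 0) ∧ S.card ≤ α ∧
      ∑ i ∈ S, ((i : ℕ) + 1) = muBlock α a := by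
  obtain ⟨S', hS', hcard, hsum⟩ := exists_subset_sum_eq_topSum α
    ((Finset.univ.filter fun i => a i ≠ 0).image fun i : Fin n => (i : ℕ) + 1)
  obtain ⟨S, hS, rfl⟩ := Finset.subset_image_iff.mp hS'
  have hinj : Set.InjOn (fun i : Fin n => (i : ℕ) + 1) S := fun i _ j _ h => by
    simpa [Fin.ext_iff] using h
  refine ⟨S, fun i hi => (Finset.mem_filter.mp (hS hi)).2, ?_, ?_⟩
  · rwa [Finset.card_image_of_injOn hinj] at hcard
  · rwa [Finset.sum_image hinj] at hsum

theorem sum_le_muBlock {α : ℕ} {a : Fin n → G} {S : Finset (Fin n)} (hS : ∀ i ∈ S, a i ≠ 0)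
    (hcard : S.card ≤ α) : ∑ i ∈ S, ((i : ℕ) + 1) ≤ muBlock α a := by
  have hinj : Set.InjOn (fun i : Fin n => (i : ℕ) + 1) S := fun i _ j _ h => by
    simpa [Fin.ext_iff] using h
  refine (Finset.sum_image (f := id) hinj).symm.trans_le <|
    sum_le_topSum (Finset.image_subset_image fun i hi => ?_) (Finset.card_image_le.trans hcard)
  simpa using hS i hi

@[simp]
theorem muBlock_zero (α : ℕ) : muBlock α (0 : Fin n → G) = 0 := by
  simp [muBlock, topSum]

/-- Each nonzero entry `a i` shows up in at least `d` columns of `W`, and in each of them its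
position `i + 1` still counts among the `α` largest positions taken from `a`. -/
theorem mul_muBlock_le_sum_muBlock {H ι : Type*} [Zero H] [DecidableEq H] [Fintype ι]
    {α d : ℕ} (a : Fin n → G) (W : Fin n → ι → H)
    (hW : ∀ i, a i ≠ 0 → d ≤ (Finset.univ.filter fun m => W i m ≠ 0).card) :
    d * muBlock α a ≤ ∑ m, muBlock α fun i => W i m := by
  obtain ⟨S, hSa, hcard, hsum⟩ := exists_support_sum_eq_muBlock α a
  calc d * muBlock α a
      = ∑ i ∈ S, d * ((i : ℕ) + 1) := by rw [← hsum, Finset.mul_sum]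
    _ ≤ ∑ i ∈ S, (Finset.univ.filter fun m => W i m ≠ 0).card * ((i : ℕ) + 1) :=
        Finset.sum_le_sum fun i hi => Nat.mul_le_mul_right _ (hW i (hSa i hi))
    _ = ∑ m, ∑ i ∈ S.filter fun i => W i m ≠ 0, ((i : ℕ) + 1) := by
        simp only [Finset.card_filter, Finset.sum_mul, Finset.sum_filter, ite_mul, one_mul,
          zero_mul]
        exact Finset.sum_comm
    _ ≤ ∑ m, muBlock α fun i => W i m :=
        Finset.sum_le_sum fun m _ => sum_le_muBlock (fun i hi => (Finset.mem_filter.mp hi).2)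
          ((Finset.card_filter_le _ _).trans hcard)

end muBlock

theorem Set.ncard_univ_pi {ι : Type*} [Fintype ι] {β : ι → Type*} (s : (i : ι) → Set (β i)) :
    (Set.univ.pi s).ncard = ∏ i, (s i).ncard := by
  simp only [Set.ncard_def, Set.encard_pi_eq_prod_encard, ENat.toNat_prod]

theorem Function.exists_ne_zero_forall_gt_eq_zero {ι : Type*} [Fintype ι] [LinearOrder ι]
    {β : ι → Type*} [∀ i, Zero (β i)] {f : (i : ι) → β i} (hf : f ≠ 0) :
    ∃ U, f U ≠ 0 ∧ ∀ u, U < u → f u = 0 := by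
  classical
  obtain ⟨u, hu⟩ := Function.ne_iff.mp hf
  obtain ⟨U, hU, hmax⟩ :=
    (Finset.univ.filter fun i => f i ≠ 0).exists_max_image id ⟨u, by simpa using hu⟩
  refine ⟨U, (Finset.mem_filter.mp hU).2, fun u hUu => ?_⟩
  by_contra h
  exact (hmax u (by simpa using h)).not_gt hUu

section Concatenation

variable {ι : Type*} {κ : ι → Type*} {F M : Type*} [Field F] {n : ℕ} (ss : ι → ℕ)

def outerCoeff (D : (u : ι) → Fin (ss u) → Fin n → κ u → F) (j : ℕ) (i : Fin n)
    (p : Σ u, κ u) : F :=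
  if h : j < ss p.1 then D p.1 ⟨j, h⟩ i p.2 else 0

theorem outerCoeff_sub (D D' : (u : ι) → Fin (ss u) → Fin n → κ u → F) (j : ℕ) (i : Fin n)
    (p : Σ u, κ u) :
    outerCoeff ss (D - D') j i p = outerCoeff ss D j i p - outerCoeff ss D' j i p := by
  unfold outerCoeff
  split_ifs <;> simp

variable [Fintype ι] [∀ u, Fintype (κ u)]

def innerWord (g : (Σ u, κ u) → M → F) (D : (u : ι) → Fin (ss u) → Fin n → κ u → F)
    (j : ℕ) (i : Fin n) : M → F :=
  ∑ p, outerCoeff ss D j i p • g p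

def concatWord (g : (Σ u, κ u) → M → F) (E : (Σ u, κ u) → M)
    (D : (u : ι) → Fin (ss u) → Fin n → κ u → F) : (Σ u, κ u × Fin (ss u)) → Fin n → F :=
  fun x i => innerWord ss g D x.2.2 i (E ⟨x.1, x.2.1⟩)

variable {ss} {g : (Σ u, κ u) → M → F} {E : (Σ u, κ u) ≃ M}

theorem concatWord_sub (D D' : (u : ι) → Fin (ss u) → Fin n → κ u → F) :
    concatWord ss g E (D - D') = concatWord ss g E D - concatWord ss g E D' := by
  ext x i
  simp only [concatWord, innerWord, outerCoeff_sub, sub_smul, Finset.sum_sub_distrib,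
    Pi.sub_apply]

theorem innerWord_ne_zero (hg : LinearIndependent F g)
    {D : (u : ι) → Fin (ss u) → Fin n → κ u → F} {u : ι} {j : Fin (ss u)} {i : Fin n}
    (h : D u j i ≠ 0) : innerWord ss g D j i ≠ 0 := by
  obtain ⟨t, ht⟩ := Function.ne_iff.mp h
  refine fun h0 => ht ?_
  simpa [outerCoeff] using Fintype.linearIndependent_iff.mp hg _ h0 ⟨u, t⟩

theorem sum_muBlock_concatWord [DecidableEq F] (α : ℕ)
    (D : (u : ι) → Fin (ss u) → Fin n → κ u → F) :
    ∑ x, muBlock α (concatWord ss g E D x) =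
      ∑ p : Σ u, κ u, ∑ j ∈ Finset.range (ss p.1),
        muBlock α fun i => innerWord ss g D j i (E p) := by
  simp only [Fintype.sum_sigma, Fintype.sum_prod_type]
  exact Finset.sum_congr rfl fun u _ => Finset.sum_congr rfl fun t _ =>
    Fin.sum_univ_eq_sum_range (fun j => muBlock α fun i => innerWord ss g D j i (E ⟨u, t⟩)) _

variable [LinearOrder ι]

theorem innerWord_apply_eq_zero (hss : Monotone ss)
    (htri : ∀ p q : Σ u, κ u, q.1 < p.1 → g p (E q) = 0)
    (D : (u : ι) → Fin (ss u) → Fin n → κ u → F) {j : ℕ} (i : Fin n) {q : Σ u, κ u}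
    (hj : ss q.1 ≤ j) : innerWord ss g D j i (E q) = 0 := by
  simp only [innerWord, Finset.sum_apply, Pi.smul_apply, smul_eq_mul]
  refine Finset.sum_eq_zero fun p _ => ?_
  unfold outerCoeff
  split_ifs with h
  · rw [htri p q (hss.reflect_lt (hj.trans_lt h)), mul_zero]
  · rw [zero_mul]

theorem innerWord_mem_span {D : (u : ι) → Fin (ss u) → Fin n → κ u → F} {U : ι}
    (hU : ∀ u, U < u → D u = 0) (j : ℕ) (i : Fin n) :
    innerWord ss g D j i ∈ Submodule.span F (g '' {p | p.1 ≤ U}) := by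
  refine Submodule.sum_mem _ fun p _ => ?_
  rcases le_or_gt p.1 U with hp | hp
  · exact Submodule.smul_mem _ _ (Submodule.subset_span ⟨p, hp, rfl⟩)
  · simp [outerCoeff, hU p.1 hp]

theorem concatWord_eq_zero (hss : Monotone ss)
    (htri : ∀ p q : Σ u, κ u, q.1 < p.1 → g p (E q) = 0) (hg : LinearIndependent F g)
    {D : (u : ι) → Fin (ss u) → Fin n → κ u → F} (h : concatWord ss g E D = 0) : D = 0 := by
  by_contra hD
  obtain ⟨u, j, i, hD⟩ : ∃ u j i, D u j i ≠ 0 := by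
    by_contra! h0
    exact hD (funext fun u => funext fun j => funext (h0 u j))
  obtain ⟨m, hm⟩ := Function.ne_iff.mp (innerWord_ne_zero hg hD)
  obtain ⟨q, rfl⟩ := E.surjective m
  have hj : (j : ℕ) < ss q.1 := by
    by_contra! hj
    exact hm (innerWord_apply_eq_zero hss htri D i hj)
  exact hm (congrFun (congrFun h ⟨q.1, q.2, ⟨j, hj⟩⟩) i)

variable [Fintype M] [DecidableEq F]

theorem mul_muWt_le_sum_muBlock_concatWord (hss : Monotone ss)
    (htri : ∀ p q : Σ u, κ u, q.1 < p.1 → g p (E q) = 0) (hg : LinearIndependent F g)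
    {α d : ℕ} {D : (u : ι) → Fin (ss u) → Fin n → κ u → F} {U : ι}
    (hU : ∀ u, U < u → D u = 0)
    (hd : ∀ w ∈ Submodule.span F (g '' {p | p.1 ≤ U}), w ≠ 0 →
      d ≤ (Finset.univ.filter fun m => w m ≠ 0).card) :
    d * muWt α (D U) ≤ ∑ x, muBlock α (concatWord ss g E D x) := by
  set col : (Σ u, κ u) → ℕ → ℕ := fun p j => muBlock α fun i => innerWord ss g D j i (E p)
  have hcol : ∀ j : Fin (ss U), d * muBlock α (D U j) ≤ ∑ p, col p j := fun j =>
    (mul_muBlock_le_sum_muBlock _ _ fun i hi =>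
      hd _ (innerWord_mem_span hU j i) (innerWord_ne_zero hg hi)).trans_eq (E.sum_comp _).symm
  have hdeleted : ∀ p, ∀ j, ss p.1 ≤ j → col p j = 0 := fun p j hj => by
    simp only [col, innerWord_apply_eq_zero hss htri D _ hj]
    exact muBlock_zero α
  calc d * muWt α (D U)
      = ∑ j : Fin (ss U), d * muBlock α (D U j) := Finset.mul_sum _ _ _
    _ ≤ ∑ j : Fin (ss U), ∑ p, col p j := Finset.sum_le_sum fun j _ => hcol j
    _ = ∑ p, ∑ j ∈ Finset.range (ss U), col p j := by
        rw [Fin.sum_univ_eq_sum_range (fun j => ∑ p, col p j), Finset.sum_comm]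
    _ ≤ ∑ p, ∑ j ∈ Finset.range (ss p.1), col p j :=
        Finset.sum_le_sum fun p _ => Finset.sum_le_sum_of_ne_zero fun j _ hj =>
          Finset.mem_range.mpr (not_le.mp fun h => hj (hdeleted p j h))
    _ = ∑ x, muBlock α (concatWord ss g E D x) := (sum_muBlock_concatWord α D).symm

theorem exists_concatenated_space (hss : Monotone ss)
    (htri : ∀ p q : Σ u, κ u, q.1 < p.1 → g p (E q) = 0) (hg : LinearIndependent F g)
    {α N : ℕ} (R : (Σ u, κ u × Fin (ss u)) ≃ Fin N)
    (Nout : (u : ι) → Set (Fin (ss u) → Fin n → κ u → F)) (d δo : ι → ℕ)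
    (hd : ∀ U, ∀ w ∈ Submodule.span F (g '' {p | p.1 ≤ U}), w ≠ 0 →
      d U ≤ (Finset.univ.filter fun m => w m ≠ 0).card)
    (hδo : ∀ u, ∀ A ∈ Nout u, ∀ B ∈ Nout u, A ≠ B → δo u ≤ muWt α (A - B)) :
    ∃ C : Set (Fin N → Fin n → F), C.ncard = ∏ u, (Nout u).ncard ∧
      ∀ A ∈ C, ∀ B ∈ C, A ≠ B → ∃ u, δo u * d u ≤ muWt α (A - B) := by
  set enc := fun D : (u : ι) → Fin (ss u) → Fin n → κ u → F => concatWord ss g E D ∘ R.symm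
  have henc_sub : ∀ D D', enc (D - D') = enc D - enc D' := fun D D' => by
    simp only [enc, concatWord_sub]
    rfl
  have henc : Function.Injective enc := fun D D' h => by
    rw [← sub_eq_zero, ← henc_sub] at h
    exact sub_eq_zero.mp <|
      concatWord_eq_zero hss htri hg (R.symm.surjective.injective_comp_right h)
  refine ⟨enc '' Set.univ.pi Nout, ?_, ?_⟩
  · rw [Set.ncard_image_of_injective _ henc, Set.ncard_univ_pi]
  rintro _ ⟨A, hA, rfl⟩ _ ⟨B, hB, rfl⟩ hne
  obtain ⟨U, hU, hmax⟩ := Function.exists_ne_zero_forall_gt_eq_zero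
    (sub_ne_zero.mpr (ne_of_apply_ne enc hne))
  refine ⟨U, ?_⟩
  calc δo U * d U
      ≤ d U * muWt α ((A - B) U) :=
        (Nat.mul_comm _ _).trans_le <| Nat.mul_le_mul_left _ <|
          hδo U _ (hA U trivial) _ (hB U trivial) (sub_ne_zero.mp hU)
    _ ≤ ∑ x, muBlock α (concatWord ss g E (A - B) x) :=
        mul_muWt_le_sum_muBlock_concatWord hss htri hg hmax (hd U)
    _ = muWt α (enc A - enc B) := by
        rw [← henc_sub]
        exact (R.symm.sum_comp _).symm

end Concatenation

theorem blokh_zyablov_varying_lengths_general (F : Type*) [Field F] [DecidableEq F]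
    (n s' α r : ℕ) (k' : ℕ → ℕ) (hk0 : k' 0 = 0) (hmono : ∀ u, u < r → k' u < k' (u + 1))
    (hkr : k' r = s') (v : ℕ → Fin s' → F)
    (htri : ∀ i : ℕ, ∀ j : Fin s', (j : ℕ) < i → v i j = 0)
    (hlin : LinearIndependent F (fun i : Fin s' => v (i : ℕ)))
    (δ' : ℕ → ℕ)
    (hδ' : ∀ u : ℕ, 1 ≤ u → u ≤ r →
      (∀ w ∈ Submodule.span F (v '' {i | i < k' u}), w ≠ 0 → δ' u ≤ hammingW w) ∧
      (∃ w ∈ Submodule.span F (v '' {i | i < k' u}), w ≠ 0 ∧ hammingW w = δ' u))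
    (ss : Fin r → ℕ) (hssmono : ∀ u u' : Fin r, u ≤ u' → ss u ≤ ss u')
    (Nout : (u : Fin r) → Set (Fin (ss u) → Fin n → (Fin (k' ((u : ℕ) + 1) - k' (u : ℕ)) → F)))
    (K : Fin r → ℕ)
    (hK : ∀ u, (Nout u).ncard = K u ∧ (Nout u).Nonempty)
    (δo : Fin r → ℕ)
    (hδo : ∀ u, (∀ A ∈ Nout u, ∀ B ∈ Nout u, A ≠ B → δo u ≤ muWt α (A - B)) ∧
      (1 < K u → ∃ A ∈ Nout u, ∃ B ∈ Nout u, A ≠ B ∧ muWt α (A - B) = δo u)) :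
    ∃ Nbig : Set (Fin (∑ u : Fin r, (k' ((u : ℕ) + 1) - k' (u : ℕ)) * ss u) → Fin n → F),
      Nbig.ncard = ∏ u, K u ∧
      ∀ A ∈ Nbig, ∀ B ∈ Nbig, A ≠ B →
        ∃ u : Fin r, δo u * δ' ((u : ℕ) + 1) ≤ muWt α (A - B) := by
  have hk : MonotoneOn k' (Set.Iic r) := (strictMonoOn_Iic_of_lt_succ hmono).monotoneOn
  obtain ⟨E, hE⟩ := exists_sigmaFinEquiv_val_eq hk hk0 hkr
  have hE_lt : ∀ p : Σ u : Fin r, Fin (k' (u + 1) - k' u), ∀ U ≤ r, (p.1 : ℕ) < U →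
      (E p : ℕ) < k' U := fun p U hU hpU => by
    have hkU : k' (p.1 + 1) ≤ k' U :=
      hk (Set.mem_Iic.mpr (hpU.trans_le hU)) (Set.mem_Iic.mpr hU) hpU
    have := p.2.2
    rw [hE]
    omega
  have htri' : ∀ p q, q.1 < p.1 → v (E p) (E q) = 0 := fun p q hqp =>
    htri _ _ ((hE_lt q p.1 p.1.2.le hqp).trans_le (by rw [hE]; omega))
  have hd : ∀ U : Fin r, ∀ w ∈ Submodule.span F ((fun p => v (E p)) '' {p | p.1 ≤ U}), w ≠ 0 →
      δ' (U + 1) ≤ hammingW w := fun U w hw hw0 => by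
    refine (hδ' (U + 1) (Nat.le_add_left 1 U) U.2).1 w (Submodule.span_mono ?_ hw) hw0
    rintro _ ⟨p, hp, rfl⟩
    exact ⟨E p, hE_lt p (U + 1) U.2 (Nat.lt_succ_of_le hp), rfl⟩
  have hcard : Fintype.card (Σ u : Fin r, Fin (k' (u + 1) - k' u) × Fin (ss u)) =
      ∑ u : Fin r, (k' (u + 1) - k' u) * ss u := by
    simp
  obtain ⟨C, hC, hCdist⟩ := exists_concatenated_space hssmono htri' (hlin.comp E E.injective)
    (Fintype.equivFinOfCardEq hcard) Nout (fun u => δ' (u + 1)) δo hd fun u => (hδo u).1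
  exact ⟨C, hC.trans (Finset.prod_congr rfl fun u _ => (hK u).1), hCdist⟩

/-- Blokh–Zyablov construction with outer spaces of varying lengths: given a chain of inner
linear `[s',k'_u,δ'_u]_q`-codes with upper triangular generators `v_1, v_2, …` and outer
`((s_u,n),α,K_u,δ_u)_{q^{e_u}}`-spaces with `s_1 ≤ … ≤ s_r`, one can construct an
`((s_1e_1 + ⋯ + s_re_r, n), α, K_1⋯K_r, δ)_q`-space with `δ ≥ min_{1≤u≤r} δ_u δ'_u`. -/
theorem blokh_zyablov_varying_lengths (q : ℕ) (F : Type*) [Field F] [Fintype F] [DecidableEq F]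
    (hq : Fintype.card F = q) (n s' α r : ℕ) (hn : 1 ≤ n) (hs' : 1 ≤ s') (hα : 1 ≤ α)
    (hr : 1 ≤ r) (k' : ℕ → ℕ) (hk0 : k' 0 = 0) (hmono : ∀ u, u < r → k' u < k' (u + 1))
    (hkr : k' r = s') (v : ℕ → Fin s' → F)
    (htri : ∀ i : ℕ, ∀ j : Fin s', (j : ℕ) < i → v i j = 0)
    (hlin : LinearIndependent F (fun i : Fin s' => v (i : ℕ)))
    (htop : Submodule.span F (v '' {i | i < k' r}) = ⊤)
    (δ' : ℕ → ℕ)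
    (hδ' : ∀ u : ℕ, 1 ≤ u → u ≤ r →
      (∀ w ∈ Submodule.span F (v '' {i | i < k' u}), w ≠ 0 → δ' u ≤ hammingW w) ∧
      (∃ w ∈ Submodule.span F (v '' {i | i < k' u}), w ≠ 0 ∧ hammingW w = δ' u))
    (ss : Fin r → ℕ) (hss1 : ∀ u, 1 ≤ ss u) (hssmono : ∀ u u' : Fin r, u ≤ u' → ss u ≤ ss u')
    (Nout : (u : Fin r) → Set (Fin (ss u) → Fin n → (Fin (k' ((u : ℕ) + 1) - k' (u : ℕ)) → F)))
    (K : Fin r → ℕ) (hfin : ∀ u, (Nout u).Finite)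
    (hK : ∀ u, (Nout u).ncard = K u ∧ (Nout u).Nonempty)
    (δo : Fin r → ℕ)
    (hδo : ∀ u, (∀ A ∈ Nout u, ∀ B ∈ Nout u, A ≠ B → δo u ≤ muWt α (A - B)) ∧
      (1 < K u → ∃ A ∈ Nout u, ∃ B ∈ Nout u, A ≠ B ∧ muWt α (A - B) = δo u)) :
    ∃ Nbig : Set (Fin (∑ u : Fin r, (k' ((u : ℕ) + 1) - k' (u : ℕ)) * ss u) → Fin n → F),
      Nbig.ncard = ∏ u, K u ∧
      ∀ A ∈ Nbig, ∀ B ∈ Nbig, A ≠ B →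
        ∃ u : Fin r, δo u * δ' ((u : ℕ) + 1) ≤ muWt α (A - B) :=
  blokh_zyablov_varying_lengths_general F n s' α r k' hk0 hmono hkr v htri hlin δ' hδ' ss hssmono
    Nout K hK δo hδo
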